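/- arXiv:1205.1424 — 3 statements merged into one kernel-verified Lean document; each statement's English description precedes it below -/
import Mathlib

section
/- For two density operators ρ₀ and ρ₁ on a finite-dimensional Hilbert space, the maximum of |⟨Γ₀|Γ₁⟩|² over all purifications |Γ₀⟩ of ρ₀ and |Γ₁⟩ of ρ₁ (on a common purifying system) equals the fidelity F(ρ₀,ρ₁) = (Tr √(√ρ₀ ρ₁ √ρ₀))². -/
/-!
A purification of `ρ` on `m` auxiliary dimensions is an `n × m` matrix `A` with `A Aᴴ = ρ`, and
the overlap of two purifications is `tr (A₀ᴴ A₁)`. Every such `A` factors as `√ρ W` with `W` a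
contraction (`W` is `A` multiplied by the pseudo-inverse of `√ρ`). Factoring `A₀`, `A₁` and
`√ρ₀ √ρ₁ = √M V`, where `M = √ρ₀ ρ₁ √ρ₀`, gives `tr (A₀ᴴ A₁) = tr (W₀ᴴ √M (V W₁))`; since `W₀` and
`V W₁` are contractions, the Cauchy–Schwarz inequality for `⟨X, Y⟩ = tr (Xᴴ √M Y)` bounds this
by `tr √M`. The bound is attained on `2n` auxiliary dimensions by `A₁ = [√ρ₁, 0]` and
`A₀ = √ρ₀ [V, √(1 - V Vᴴ)]`, a purification of `ρ₀` because the block matrix has orthonormal rows.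
-/

open Matrix Complex Finset
open scoped ComplexOrder

noncomputable section

/-- The inner product `⟨v|w⟩`. -/
def ovlp {ι : Type*} [Fintype ι] (v w : ι → ℂ) : ℂ := ∑ x, star (v x) * w x

/-- `Γ` is a purification of `ρ` (unit vector whose partial trace over `K` is `ρ`). -/
def Purifies {n : ℕ} {K : Type*} [Fintype K] (Γ : Fin n × K → ℂ)
    (ρ : Matrix (Fin n) (Fin n) ℂ) : Prop :=
  (∑ x, ‖Γ x‖ ^ 2 = 1) ∧ ∀ i j, ρ i j = ∑ k, Γ (i, k) * star (Γ (j, k))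

namespace Matrix.PosSemidef

/-- The positive semidefinite square root of a positive semidefinite matrix
(the definition Mathlib had in December 2024, since removed). -/
def sqrt {n 𝕜 : Type*} [Fintype n] [RCLike 𝕜] [DecidableEq n] {A : Matrix n n 𝕜}
    (hA : PosSemidef A) : Matrix n n 𝕜 :=
  hA.1.eigenvectorUnitary.1 * diagonal ((↑) ∘ (√·) ∘ hA.1.eigenvalues) *
  (star hA.1.eigenvectorUnitary : Matrix n n 𝕜)

lemma posSemidef_sqrt {n 𝕜 : Type*} [Fintype n] [RCLike 𝕜] [DecidableEq n] {A : Matrix n n 𝕜}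
    (hA : PosSemidef A) : PosSemidef hA.sqrt := by
  have hd : (diagonal ((↑) ∘ (√·) ∘ hA.1.eigenvalues : n → 𝕜)).PosSemidef :=
    posSemidef_diagonal_iff.2 (fun i => by
      simp only [Function.comp_apply]
      exact RCLike.ofReal_nonneg.2 (Real.sqrt_nonneg _))
  have h := hd.mul_mul_conjTranspose_same (hA.1.eigenvectorUnitary : Matrix n n 𝕜)
  unfold sqrt
  rwa [Matrix.star_eq_conjTranspose]

end Matrix.PosSemidef

/-- The fidelity `F(ρ₀,ρ₁) = (Tr √(√ρ₀ ρ₁ √ρ₀))²`. -/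
def fidelity {n : ℕ} (ρ₀ ρ₁ : Matrix (Fin n) (Fin n) ℂ)
    (h₀ : ρ₀.PosSemidef) (h₁ : ρ₁.PosSemidef) : ℝ :=
  ((show (h₀.sqrt * ρ₁ * h₀.sqrt).PosSemidef by
      have h := h₁.mul_mul_conjTranspose_same h₀.sqrt
      rwa [h₀.posSemidef_sqrt.1] at h).sqrt.trace).re ^ 2

open scoped MatrixOrder

namespace Matrix

theorem submatrix_id_mul_conjTranspose {ι κ κ' R : Type*} [Fintype κ] [Fintype κ']
    [CommSemiring R] [StarRing R] (A B : Matrix ι κ R) (e : κ' ≃ κ) :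
    A.submatrix id e * (B.submatrix id e)ᴴ = A * Bᴴ := by
  rw [conjTranspose_submatrix, submatrix_mul_equiv, submatrix_id_id]

variable {𝕜 n m : Type*} [RCLike 𝕜] [Fintype n] [Fintype m]

theorem norm_trace_conjTranspose_mul_sq_le (X Y : Matrix n m 𝕜) :
    ‖(Xᴴ * Y).trace‖ ^ 2 ≤ RCLike.re (Xᴴ * X).trace * RCLike.re (Yᴴ * Y).trace := by
  have inner_eq (A B : Matrix n m 𝕜) :
      inner 𝕜 (WithLp.toLp 2 A.vec : EuclideanSpace 𝕜 _) (WithLp.toLp 2 B.vec) =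
        (Aᴴ * B).trace := by
    rw [EuclideanSpace.inner_eq_star_dotProduct, ← star_vec_dotProduct_vec, dotProduct_comm]
  have norm_sq (A : Matrix n m 𝕜) :
      ‖(WithLp.toLp 2 A.vec : EuclideanSpace 𝕜 _)‖ ^ 2 = RCLike.re (Aᴴ * A).trace := by
    rw [← inner_eq, inner_self_eq_norm_sq]
  rw [← inner_eq, ← norm_sq, ← norm_sq, ← mul_pow]
  gcongr
  exact norm_inner_le_norm _ _

theorem re_trace_le_re_trace {A B : Matrix n n 𝕜} (h : A ≤ B) :
    RCLike.re A.trace ≤ RCLike.re B.trace := by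
  have := (RCLike.nonneg_iff.mp (le_iff.mp h).trace_nonneg).1
  rwa [trace_sub, map_sub, sub_nonneg] at this

variable [DecidableEq n]

theorem PosSemidef.sqrt_eq_cfcSqrt {A : Matrix n n 𝕜} (hA : A.PosSemidef) :
    hA.sqrt = CFC.sqrt A := by
  rw [CFC.sqrt_eq_real_sqrt A hA.nonneg, cfcₙ_eq_cfc, hA.1.cfc_eq, IsHermitian.cfc,
    Unitary.conjStarAlgAut_apply]
  rfl

theorem re_trace_conjTranspose_mul_mul_le {P : Matrix n n 𝕜} (hP : 0 ≤ P) {X : Matrix n m 𝕜}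
    (hX : X * Xᴴ ≤ 1) : RCLike.re (Xᴴ * P * X).trace ≤ RCLike.re P.trace := by
  have hQ : IsSelfAdjoint (CFC.sqrt P) := (CFC.sqrt_nonneg P).isSelfAdjoint
  have h := re_trace_le_re_trace (hQ.conjugate_le_conjugate hX)
  rw [Matrix.mul_one, CFC.sqrt_mul_sqrt_self P, trace_mul_cycle, CFC.sqrt_mul_sqrt_self P] at h
  rwa [trace_mul_comm, ← Matrix.mul_assoc, trace_mul_comm]

theorem norm_trace_conjTranspose_mul_mul_le {P : Matrix n n 𝕜} (hP : 0 ≤ P)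
    {X Y : Matrix n m 𝕜} (hX : X * Xᴴ ≤ 1) (hY : Y * Yᴴ ≤ 1) :
    ‖(Xᴴ * P * Y).trace‖ ≤ RCLike.re P.trace := by
  have hconj (Z Z' : Matrix n m 𝕜) :
      Zᴴ * P * Z' = (CFC.sqrt P * Z)ᴴ * (CFC.sqrt P * Z') := by
    conv_lhs => rw [← CFC.sqrt_mul_sqrt_self P]
    simp only [conjTranspose_mul, (CFC.sqrt_nonneg P).posSemidef.1.eq, Matrix.mul_assoc]
  have hPtr : 0 ≤ RCLike.re P.trace := (RCLike.nonneg_iff.mp hP.posSemidef.trace_nonneg).1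
  refine (pow_le_pow_iff_left₀ (norm_nonneg _) hPtr two_ne_zero).mp ?_
  calc ‖(Xᴴ * P * Y).trace‖ ^ 2
      ≤ RCLike.re (Xᴴ * P * X).trace * RCLike.re (Yᴴ * P * Y).trace := by
        rw [hconj, hconj, hconj]; exact norm_trace_conjTranspose_mul_sq_le _ _
    _ ≤ RCLike.re P.trace ^ 2 := by
        rw [sq]
        exact mul_le_mul (re_trace_conjTranspose_mul_mul_le hP hX)
          (re_trace_conjTranspose_mul_mul_le hP hY)
          (RCLike.nonneg_iff.mp (hP.posSemidef.conjTranspose_mul_mul_same Y).trace_nonneg).1 hPtr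

theorem exists_polar_decomposition (A : Matrix n m 𝕜) :
    ∃ W : Matrix n m 𝕜,
      CFC.sqrt (A * Aᴴ) * W = A ∧ A * Wᴴ = CFC.sqrt (A * Aᴴ) ∧ W * Wᴴ ≤ 1 := by
  obtain ⟨ρ, hA⟩ : ∃ ρ, A * Aᴴ = ρ := ⟨_, rfl⟩
  have hρ : 0 ≤ ρ := hA ▸ (posSemidef_self_mul_conjTranspose A).nonneg
  have hmul (f g : ℝ → ℝ) : cfc f ρ * cfc g ρ = cfc (fun x => f x * g x) ρ :=
    (cfc_mul f g ρ (ρ.finite_real_spectrum.continuousOn f)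
      (ρ.finite_real_spectrum.continuousOn g)).symm
  have hid : cfc (fun x : ℝ => x) ρ = ρ := cfc_id' ℝ ρ
  have hsqrt : CFC.sqrt ρ = cfc Real.sqrt ρ := by
    rw [CFC.sqrt_eq_real_sqrt ρ, cfcₙ_eq_cfc]
  -- `(√x)⁻¹` vanishes at `0` (junk values), so `g` is the Moore–Penrose inverse of `√ρ`.
  set g := cfc (fun x : ℝ => (√x)⁻¹) ρ
  have hg : gᴴ = g := (cfc_predicate (fun x : ℝ => (√x)⁻¹) ρ).star_eq
  have hρg : ρ * g = CFC.sqrt ρ := by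
    calc ρ * g = cfc (fun x : ℝ => x) ρ * g := by rw [hid]
      _ = CFC.sqrt ρ := by
        rw [hmul, hsqrt]
        exact cfc_congr fun x _ => by rw [← div_eq_mul_inv, Real.div_sqrt]
  have hgρ : g * ρ = CFC.sqrt ρ := by
    calc g * ρ = g * cfc (fun x : ℝ => x) ρ := by rw [hid]
      _ = CFC.sqrt ρ := by
        rw [hmul, hsqrt]
        exact cfc_congr fun x _ => by rw [mul_comm, ← div_eq_mul_inv, Real.div_sqrt]
  have hPρ : CFC.sqrt ρ * g * ρ = ρ := by
    rw [Matrix.mul_assoc, hgρ, CFC.sqrt_mul_sqrt_self ρ]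
  have hPA : CFC.sqrt ρ * g * A = A := by
    have h0 : (CFC.sqrt ρ * g - 1) * A * ((CFC.sqrt ρ * g - 1) * A)ᴴ = 0 := by
      rw [conjTranspose_mul, Matrix.mul_assoc, ← Matrix.mul_assoc A, hA, ← Matrix.mul_assoc,
        Matrix.sub_mul, hPρ, Matrix.one_mul, sub_self, Matrix.zero_mul]
    rwa [self_mul_conjTranspose_eq_zero, Matrix.sub_mul, Matrix.one_mul, sub_eq_zero] at h0
  rw [hA]
  refine ⟨g * A, by rw [← Matrix.mul_assoc, hPA], ?_, ?_⟩
  · rw [conjTranspose_mul, hg, ← Matrix.mul_assoc, hA, hρg]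
  · rw [conjTranspose_mul, hg, Matrix.mul_assoc, ← Matrix.mul_assoc A, hA, ← Matrix.mul_assoc, hgρ,
      hsqrt, hmul]
    refine cfc_le_one _ _ fun x _ => ?_
    rcases eq_or_ne (√x) 0 with h | h <;> simp [h]

theorem fromCols_sqrt_one_sub_mul_conjTranspose {X : Matrix n m 𝕜} (hX : X * Xᴴ ≤ 1) :
    fromCols X (CFC.sqrt (1 - X * Xᴴ)) * (fromCols X (CFC.sqrt (1 - X * Xᴴ)))ᴴ = 1 := by
  rw [conjTranspose_fromCols_eq_fromRows_conjTranspose, fromCols_mul_fromRows,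
    (CFC.sqrt_nonneg _).posSemidef.1.eq, CFC.sqrt_mul_sqrt_self _ (sub_nonneg.mpr hX),
    add_sub_cancel]

theorem sqrt_mul_sqrt_mul_conjTranspose {ρ₀ ρ₁ : Matrix n n 𝕜} (h₁ : 0 ≤ ρ₁) :
    CFC.sqrt ρ₀ * CFC.sqrt ρ₁ * (CFC.sqrt ρ₀ * CFC.sqrt ρ₁)ᴴ = CFC.sqrt ρ₀ * ρ₁ * CFC.sqrt ρ₀ := by
  rw [conjTranspose_mul, (CFC.sqrt_nonneg ρ₀).posSemidef.1.eq, (CFC.sqrt_nonneg ρ₁).posSemidef.1.eq,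
    Matrix.mul_assoc, ← Matrix.mul_assoc (CFC.sqrt ρ₁), CFC.sqrt_mul_sqrt_self ρ₁, Matrix.mul_assoc]

theorem norm_trace_conjTranspose_mul_le {ρ₀ ρ₁ : Matrix n n 𝕜} {A₀ A₁ : Matrix n m 𝕜}
    (h₀ : A₀ * A₀ᴴ = ρ₀) (h₁ : A₁ * A₁ᴴ = ρ₁) :
    ‖(A₀ᴴ * A₁).trace‖ ≤ RCLike.re (CFC.sqrt (CFC.sqrt ρ₀ * ρ₁ * CFC.sqrt ρ₀)).trace := by
  obtain ⟨W₀, hA₀, -, hW₀⟩ := exists_polar_decomposition A₀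
  obtain ⟨W₁, hA₁, -, hW₁⟩ := exists_polar_decomposition A₁
  obtain ⟨W, hN, -, hW⟩ := exists_polar_decomposition (CFC.sqrt ρ₀ * CFC.sqrt ρ₁)
  rw [h₀] at hA₀
  rw [h₁] at hA₁
  rw [sqrt_mul_sqrt_mul_conjTranspose (h₁ ▸ (posSemidef_self_mul_conjTranspose A₁).nonneg)] at hN
  have hA : A₀ᴴ * A₁ = W₀ᴴ * CFC.sqrt (CFC.sqrt ρ₀ * ρ₁ * CFC.sqrt ρ₀) * (W * W₁) := by
    rw [← hA₀, ← hA₁, conjTranspose_mul, (CFC.sqrt_nonneg ρ₀).posSemidef.1.eq, Matrix.mul_assoc,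
      ← Matrix.mul_assoc (CFC.sqrt ρ₀), ← hN]
    simp only [Matrix.mul_assoc]
  have hWW₁ : W * W₁ * (W * W₁)ᴴ ≤ 1 := by
    calc W * W₁ * (W * W₁)ᴴ = W * (W₁ * W₁ᴴ) * star W := by
          rw [conjTranspose_mul, star_eq_conjTranspose]; simp only [Matrix.mul_assoc]
      _ ≤ W * 1 * star W := star_right_conjugate_le_conjugate hW₁ W
      _ ≤ 1 := by rwa [Matrix.mul_one, star_eq_conjTranspose]
  rw [hA]
  exact norm_trace_conjTranspose_mul_mul_le (CFC.sqrt_nonneg _) hW₀ hWW₁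

theorem exists_trace_conjTranspose_mul_eq {ρ₀ ρ₁ : Matrix n n 𝕜} (h₀ : 0 ≤ ρ₀) (h₁ : 0 ≤ ρ₁) :
    ∃ A₀ A₁ : Matrix n (n ⊕ n) 𝕜, A₀ * A₀ᴴ = ρ₀ ∧ A₁ * A₁ᴴ = ρ₁ ∧
      (A₀ᴴ * A₁).trace = (CFC.sqrt (CFC.sqrt ρ₀ * ρ₁ * CFC.sqrt ρ₀)).trace := by
  obtain ⟨W, -, hNW, hW⟩ := exists_polar_decomposition (CFC.sqrt ρ₀ * CFC.sqrt ρ₁)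
  rw [sqrt_mul_sqrt_mul_conjTranspose h₁] at hNW
  refine ⟨CFC.sqrt ρ₀ * fromCols W (CFC.sqrt (1 - W * Wᴴ)), fromCols (CFC.sqrt ρ₁) 0, ?_, ?_, ?_⟩
  · rw [conjTranspose_mul, Matrix.mul_assoc, ← Matrix.mul_assoc (fromCols _ _),
      fromCols_sqrt_one_sub_mul_conjTranspose hW, Matrix.one_mul,
      (CFC.sqrt_nonneg ρ₀).posSemidef.1.eq, CFC.sqrt_mul_sqrt_self ρ₀]
  · rw [conjTranspose_fromCols_eq_fromRows_conjTranspose, fromCols_mul_fromRows,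
      (CFC.sqrt_nonneg ρ₁).posSemidef.1.eq, CFC.sqrt_mul_sqrt_self ρ₁, Matrix.zero_mul, add_zero]
  · rw [trace_mul_comm, conjTranspose_mul, conjTranspose_fromCols_eq_fromRows_conjTranspose,
      ← Matrix.mul_assoc, fromCols_mul_fromRows, Matrix.zero_mul, add_zero, trace_mul_comm,
      (CFC.sqrt_nonneg ρ₀).posSemidef.1.eq, ← Matrix.mul_assoc, hNW]

end Matrix

theorem purifies_uncurry {n : ℕ} {K : Type*} [Fintype K] {A : Matrix (Fin n) K ℂ}
    {ρ : Matrix (Fin n) (Fin n) ℂ} (hA : A * Aᴴ = ρ) (hρ : ρ.trace = 1) :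
    Purifies (Function.uncurry A) ρ := by
  refine ⟨?_, fun i j => by rw [← hA]; rfl⟩
  have h : ((∑ x, ‖Function.uncurry A x‖ ^ 2 : ℝ) : ℂ) = (A * Aᴴ).trace := by
    simp only [Fintype.sum_prod_type, ofReal_sum, ofReal_pow, trace, diag_apply,
      Matrix.mul_apply, conjTranspose_apply, RCLike.star_def, RCLike.mul_conj, coe_algebraMap]
    rfl
  exact_mod_cast h.trans (hA ▸ hρ)

theorem Purifies.mul_conjTranspose_eq {n : ℕ} {K : Type*} [Fintype K] {Γ : Fin n × K → ℂ}
    {ρ : Matrix (Fin n) (Fin n) ℂ} (h : Purifies Γ ρ) :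
    of (Function.curry Γ) * (of (Function.curry Γ))ᴴ = ρ := by
  ext i j
  rw [h.2 i j]
  rfl

theorem ovlp_eq_trace {ι κ : Type*} [Fintype ι] [Fintype κ] (Γ Γ' : ι × κ → ℂ) :
    ovlp Γ Γ' = ((of (Function.curry Γ))ᴴ * of (Function.curry Γ')).trace := by
  simp only [ovlp, trace, Matrix.diag, Matrix.mul_apply, conjTranspose_apply,
    Fintype.sum_prod_type]
  exact Finset.sum_comm

theorem ovlp_uncurry {ι κ : Type*} [Fintype ι] [Fintype κ] (A B : Matrix ι κ ℂ) :
    ovlp (Function.uncurry A) (Function.uncurry B) = (Aᴴ * B).trace := by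
  rw [ovlp_eq_trace]
  rfl

theorem fidelity_eq {n : ℕ} {ρ₀ ρ₁ : Matrix (Fin n) (Fin n) ℂ} (h₀ : ρ₀.PosSemidef)
    (h₁ : ρ₁.PosSemidef) :
    fidelity ρ₀ ρ₁ h₀ h₁ = (CFC.sqrt (CFC.sqrt ρ₀ * ρ₁ * CFC.sqrt ρ₀)).trace.re ^ 2 := by
  rw [fidelity, PosSemidef.sqrt_eq_cfcSqrt, h₀.sqrt_eq_cfcSqrt]

/-- Uhlmann's theorem: the maximum of |⟨Γ₀|Γ₁⟩|² over purifications equals the fidelity. -/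
theorem uhlmann {n : ℕ} (ρ₀ ρ₁ : Matrix (Fin n) (Fin n) ℂ)
    (h₀ : ρ₀.PosSemidef) (h₁ : ρ₁.PosSemidef)
    (ht₀ : ρ₀.trace = 1) (ht₁ : ρ₁.trace = 1) :
    IsGreatest {r : ℝ | ∃ (m : ℕ) (Γ₀ Γ₁ : Fin n × Fin m → ℂ),
        Purifies Γ₀ ρ₀ ∧ Purifies Γ₁ ρ₁ ∧ r = ‖ovlp Γ₀ Γ₁‖ ^ 2}
      (fidelity ρ₀ ρ₁ h₀ h₁) := by
  rw [fidelity_eq]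
  constructor
  · obtain ⟨A₀, A₁, hA₀, hA₁, htr⟩ := exists_trace_conjTranspose_mul_eq h₀.nonneg h₁.nonneg
    let e : Fin (n + n) ≃ Fin n ⊕ Fin n := finSumFinEquiv.symm
    refine ⟨n + n, Function.uncurry (A₀.submatrix id e), Function.uncurry (A₁.submatrix id e),
      purifies_uncurry ((A₀.submatrix_id_mul_conjTranspose A₀ e).trans hA₀) ht₀,
      purifies_uncurry ((A₁.submatrix_id_mul_conjTranspose A₁ e).trans hA₁) ht₁, ?_⟩
    rw [ovlp_uncurry, trace_mul_comm, submatrix_id_mul_conjTranspose, trace_mul_comm, htr,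
      Complex.re_eq_norm.mpr
        (CFC.sqrt_nonneg (CFC.sqrt ρ₀ * ρ₁ * CFC.sqrt ρ₀)).posSemidef.trace_nonneg]
  · rintro r ⟨m, Γ₀, Γ₁, hΓ₀, hΓ₁, rfl⟩
    rw [ovlp_eq_trace]
    exact pow_le_pow_left₀ (norm_nonneg _)
      (norm_trace_conjTranspose_mul_le hΓ₀.mul_conjTranspose_eq hΓ₁.mul_conjTranspose_eq) 2
end
end

section
/- If τ_{AB} satisfies the phase symmetry U_θ τ_{kl} U_θ† = τ_{k+1,l+1} (mod M), then its partial transpose τ_{AB}^{T_A} satisfies the same symmetry, and consequently ||τ_{AB}^{T_A}||₁ = Σ_{k=0}^{M−1} ||Ẽ_k||₁, where ⊕_k Ẽ_k is the block-diagonal standard form of τ_{AB}^{T_A}. -/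
open Matrix Complex Finset
open scoped ComplexOrder

noncomputable section

/-- The trace norm ‖A‖₁ = Tr √(A†A). -/
def traceNorm {ι : Type*} [Fintype ι] [DecidableEq ι] (A : Matrix ι ι ℂ) : ℝ :=
  (((Matrix.posSemidef_conjTranspose_mul_self A).isHermitian.eigenvectorUnitary.1 *
      diagonal ((fun x : ℝ => (x : ℂ)) ∘ (√·) ∘ (Matrix.posSemidef_conjTranspose_mul_self A).isHermitian.eigenvalues) *
      (star (Matrix.posSemidef_conjTranspose_mul_self A).isHermitian.eigenvectorUnitary :
        Matrix ι ι ℂ)).trace).re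

/-! The phase symmetry gives `τ b a = U ^ a * τ (b - a) 0 * (U ^ a)ᴴ`, so conjugating the partial
transpose by the block-diagonal unitary `⊕ₐ (U ^ a)ᴴ` turns it into a block-circulant matrix with
blocks `G d = τ d 0 * U ^ d / M`. The block discrete Fourier transform diagonalizes it, with
blocks `Bₖ = ∑ d, ω ^ (k d) • G d`, and `Ẽₖ = (ω ^ (k k) • U ^ k) * Bₖ` differs from `Bₖ` by a
unitary factor. The trace norm is invariant under all these unitaries and additive over
block-diagonal matrices. -/

section TraceNorm

open scoped MatrixOrder

variable {ι κ : Type*} [Fintype ι] [DecidableEq ι] [Fintype κ] [DecidableEq κ]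

lemma traceNorm_eq_re_trace_sqrt (A : Matrix ι ι ℂ) :
    traceNorm A = (CFC.sqrt (Aᴴ * A)).trace.re := by
  have hA := posSemidef_conjTranspose_mul_self A
  rw [CFC.sqrt_eq_real_sqrt _ hA.nonneg, cfcₙ_eq_cfc, hA.isHermitian.cfc_eq]
  rfl

lemma traceNorm_eq_of_conjTranspose_mul_self_eq {A B : Matrix ι ι ℂ} (h : Aᴴ * A = Bᴴ * B) :
    traceNorm A = traceNorm B := by
  rw [traceNorm_eq_re_trace_sqrt, traceNorm_eq_re_trace_sqrt, h]

lemma traceNorm_mul_of_conjTranspose_mul_self_eq_one {W : Matrix ι ι ℂ} (hW : Wᴴ * W = 1)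
    (A : Matrix ι ι ℂ) : traceNorm (W * A) = traceNorm A := by
  refine traceNorm_eq_of_conjTranspose_mul_self_eq ?_
  rw [conjTranspose_mul, Matrix.mul_assoc, ← Matrix.mul_assoc Wᴴ, hW, Matrix.one_mul]

lemma sqrt_conjTranspose_mul_mul_same {V : Matrix ι κ ℂ} (hV : V * Vᴴ = 1) {P : Matrix ι ι ℂ}
    (hP : 0 ≤ P) : CFC.sqrt (Vᴴ * P * V) = Vᴴ * CFC.sqrt P * V := by
  refine CFC.sqrt_unique ?_ ((CFC.sqrt_nonneg P).posSemidef.conjTranspose_mul_mul_same V).nonneg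
  rw [Matrix.mul_assoc, Matrix.mul_assoc, ← Matrix.mul_assoc V, ← Matrix.mul_assoc V, hV,
    Matrix.one_mul, ← Matrix.mul_assoc (CFC.sqrt P), CFC.sqrt_mul_sqrt_self P hP,
    ← Matrix.mul_assoc]

lemma traceNorm_conjTranspose_mul_mul_same {V : Matrix ι κ ℂ} (hV : V * Vᴴ = 1)
    (A : Matrix ι ι ℂ) : traceNorm (Vᴴ * A * V) = traceNorm A := by
  have hgram : (Vᴴ * A * V)ᴴ * (Vᴴ * A * V) = Vᴴ * (Aᴴ * A) * V := by
    simp only [conjTranspose_mul, conjTranspose_conjTranspose, Matrix.mul_assoc]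
    rw [← Matrix.mul_assoc V Vᴴ, hV, Matrix.one_mul]
  rw [traceNorm_eq_re_trace_sqrt, traceNorm_eq_re_trace_sqrt, hgram,
    sqrt_conjTranspose_mul_mul_same hV (posSemidef_conjTranspose_mul_self A).nonneg,
    trace_mul_comm, ← Matrix.mul_assoc, hV, Matrix.one_mul]

end TraceNorm

lemma pow_val_add_of_pow_eq_one {M : ℕ} {G : Type*} [Monoid G] {x : G} (hx : x ^ M = 1)
    (a b : Fin M) :    x ^ (a + b).val = x ^ a.val * x ^ b.val := by
  rw [Fin.val_add, ← pow_eq_pow_mod _ hx, pow_add]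

lemma star_mul_self_of_norm_eq_one {z : ℂ} (hz : ‖z‖ = 1) : star z * z = 1 := by
  rw [Complex.star_def, Complex.conj_mul', hz]
  norm_num

lemma IsPrimitiveRoot.sum_star_pow_mul_pow {M : ℕ} [NeZero M] {ζ : ℂ} (hζ : IsPrimitiveRoot ζ M)
    (a b : Fin M) :
    ∑ k : Fin M, star (ζ ^ (k.val * a.val)) * ζ ^ (k.val * b.val)
      = if a = b then (M : ℂ) else 0 := by
  have hnorm : ∀ n : ℕ, ‖ζ ^ n‖ = 1 := fun n => by
    rw [norm_pow, hζ.norm'_eq_one (NeZero.ne M), one_pow]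
  set η := star (ζ ^ a.val) * ζ ^ b.val
  have hterm : ∀ k : Fin M, star (ζ ^ (k.val * a.val)) * ζ ^ (k.val * b.val) = η ^ k.val := by
    intro k
    rw [mul_pow, ← star_pow, ← pow_mul, ← pow_mul, mul_comm a.val, mul_comm b.val]
  simp only [hterm, Fin.sum_univ_eq_sum_range (η ^ ·) M]
  split_ifs with hab
  · subst hab
    simp [η, star_mul_self_of_norm_eq_one (hnorm _)]
  · have hη : η ≠ 1 := fun h => hab <| Fin.ext <| hζ.pow_inj a.isLt b.isLt <| by
      calc ζ ^ a.val = ζ ^ a.val * η := by rw [h, mul_one]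
        _ = star (ζ ^ a.val) * ζ ^ a.val * ζ ^ b.val := by ring
        _ = ζ ^ b.val := by rw [star_mul_self_of_norm_eq_one (hnorm _), one_mul]
    have hηM : η ^ M = 1 := by
      rw [mul_pow, ← star_pow, ← pow_mul, ← pow_mul, mul_comm a.val, mul_comm b.val, pow_mul,
        pow_mul, hζ.pow_eq_one, one_pow, one_pow, star_one, one_mul]
    rw [geom_sum_eq hη, hηM, sub_self, zero_div]

section BlockMatrix

open scoped MatrixOrder

variable {ι κ : Type*}

lemma comp_conjTranspose (X : Matrix κ κ (Matrix ι ι ℂ)) :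
    comp κ κ ι ι ℂ Xᴴ = (comp κ κ ι ι ℂ X)ᴴ := rfl

variable [Fintype ι] [Fintype κ]

lemma comp_mul (X Y : Matrix κ κ (Matrix ι ι ℂ)) :
    comp κ κ ι ι ℂ (X * Y) = comp κ κ ι ι ℂ X * comp κ κ ι ι ℂ Y :=
  map_mul (compRingEquiv κ ι ℂ) X Y

variable [DecidableEq κ]

lemma trace_comp_diagonal (P : κ → Matrix ι ι ℂ) :
    (comp κ κ ι ι ℂ (diagonal P)).trace = ∑ k, (P k).trace := by
  simp [trace, Fintype.sum_prod_type]

variable [DecidableEq ι]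

lemma comp_diagonal_mul_conjTranspose {S : κ → Matrix ι ι ℂ} (hS : ∀ k, S k * (S k)ᴴ = 1) :
    comp κ κ ι ι ℂ (diagonal S) * (comp κ κ ι ι ℂ (diagonal S))ᴴ = 1 := by
  rw [← comp_conjTranspose, ← comp_mul, diagonal_conjTranspose, diagonal_mul_diagonal]
  simp only [Pi.star_apply, star_eq_conjTranspose, hS, diagonal_one, comp_one]

lemma comp_diagonal_nonneg {P : κ → Matrix ι ι ℂ} (hP : ∀ k, 0 ≤ P k) :
    0 ≤ comp κ κ ι ι ℂ (diagonal P) := by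
  have hsq : diagonal P
      = (diagonal fun k => CFC.sqrt (P k))ᴴ * diagonal fun k => CFC.sqrt (P k) := by
    rw [diagonal_conjTranspose, diagonal_mul_diagonal]
    refine congrArg diagonal (funext fun k => ?_)
    rw [Pi.star_apply, (CFC.sqrt_nonneg (P k)).isSelfAdjoint.star_eq,
      CFC.sqrt_mul_sqrt_self (P k) (hP k)]
  rw [hsq, comp_mul, comp_conjTranspose]
  exact (posSemidef_conjTranspose_mul_self _).nonneg

lemma sqrt_comp_diagonal {P : κ → Matrix ι ι ℂ} (hP : ∀ k, 0 ≤ P k) :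
    CFC.sqrt (comp κ κ ι ι ℂ (diagonal P))
      = comp κ κ ι ι ℂ (diagonal fun k => CFC.sqrt (P k)) := by
  refine CFC.sqrt_unique ?_ (comp_diagonal_nonneg fun k => CFC.sqrt_nonneg (P k))
  rw [← comp_mul, diagonal_mul_diagonal]
  exact congrArg _ (congrArg diagonal (funext fun k => CFC.sqrt_mul_sqrt_self (P k) (hP k)))

lemma traceNorm_comp_diagonal (E : κ → Matrix ι ι ℂ) :
    traceNorm (comp κ κ ι ι ℂ (diagonal E)) = ∑ k, traceNorm (E k) := by
  rw [traceNorm_eq_re_trace_sqrt, ← comp_conjTranspose, ← comp_mul, diagonal_conjTranspose,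
    diagonal_mul_diagonal]
  simp only [Pi.star_apply, star_eq_conjTranspose]
  rw [sqrt_comp_diagonal fun k => (posSemidef_conjTranspose_mul_self (E k)).nonneg,
    trace_comp_diagonal, Complex.re_sum]
  simp only [traceNorm_eq_re_trace_sqrt]

end BlockMatrix

section BlockCirculant

variable {M : ℕ} {ζ : ℂ}

def blockCirculant {ι : Type*} (G : Fin M → Matrix ι ι ℂ) :
    Matrix (Fin M) (Fin M) (Matrix ι ι ℂ) :=
  of fun a b => G (b - a)

def dftMatrix (M : ℕ) (ζ : ℂ) : Matrix (Fin M) (Fin M) ℂ :=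
  of fun k a => ((√M)⁻¹ : ℝ) * star (ζ ^ (k.val * a.val))

lemma star_dftMatrix_mul_dftMatrix (k a b : Fin M) :
    star (dftMatrix M ζ k a) * dftMatrix M ζ k b
      = (M : ℂ)⁻¹ * (star (ζ ^ (k.val * b.val)) * ζ ^ (k.val * a.val)) := by
  have hc : (((√M)⁻¹ : ℝ) : ℂ) ^ 2 = (M : ℂ)⁻¹ := by
    rw [← Complex.ofReal_pow, inv_pow, Real.sq_sqrt (Nat.cast_nonneg M)]
    push_cast; rfl
  simp only [dftMatrix, of_apply, star_mul', Complex.star_def, Complex.conj_ofReal,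
    Complex.conj_conj, ← hc]
  ring

lemma dftMatrix_mul_conjTranspose [NeZero M] (hζ : IsPrimitiveRoot ζ M) :
    dftMatrix M ζ * (dftMatrix M ζ)ᴴ = 1 := by
  rw [mul_eq_one_comm]
  ext a b
  simp only [mul_apply, conjTranspose_apply, star_dftMatrix_mul_dftMatrix, ← mul_sum,
    hζ.sum_star_pow_mul_pow, one_apply, eq_comm (a := b)]
  split_ifs <;> simp [NeZero.ne M]

lemma sum_star_dftMatrix_mul_dftMatrix_mul_pow [NeZero M] (hζ : IsPrimitiveRoot ζ M)
    (a b d : Fin M) :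
    ∑ k, star (dftMatrix M ζ k a) * dftMatrix M ζ k b * ζ ^ (k.val * d.val)
      = if d = b - a then 1 else 0 := by
  have hterm : ∀ k : Fin M, star (dftMatrix M ζ k a) * dftMatrix M ζ k b * ζ ^ (k.val * d.val)
      = (M : ℂ)⁻¹ * (star (ζ ^ (k.val * b.val)) * ζ ^ (k.val * (a + d).val)) := fun k => by
    have hk : (ζ ^ k.val) ^ M = 1 := by rw [pow_right_comm, hζ.pow_eq_one, one_pow]
    simp only [star_dftMatrix_mul_dftMatrix, pow_mul, pow_val_add_of_pow_eq_one hk]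
    ring
  have hshift : b = a + d ↔ d = b - a := by rw [eq_sub_iff_add_eq', eq_comm]
  simp only [hterm, ← mul_sum, hζ.sum_star_pow_mul_pow, hshift]
  split_ifs <;> simp [NeZero.ne M]

variable {ι : Type*} [Fintype ι] [DecidableEq ι]

lemma conjTranspose_mul_diagonal_mul_eq_blockCirculant [NeZero M] (hζ : IsPrimitiveRoot ζ M)
    (G : Fin M → Matrix ι ι ℂ) :
    ((dftMatrix M ζ).map (algebraMap ℂ (Matrix ι ι ℂ)))ᴴ
        * diagonal (fun k => ∑ d, ζ ^ (k.val * d.val) • G d)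
        * (dftMatrix M ζ).map (algebraMap ℂ (Matrix ι ι ℂ))
      = blockCirculant G := by
  ext1 a b
  have hblock : ∀ k, algebraMap ℂ (Matrix ι ι ℂ) (star (dftMatrix M ζ k a))
        * (∑ d, ζ ^ (k.val * d.val) • G d) * algebraMap ℂ (Matrix ι ι ℂ) (dftMatrix M ζ k b)
      = ∑ d, (star (dftMatrix M ζ k a) * dftMatrix M ζ k b * ζ ^ (k.val * d.val)) • G d := by
    intro k
    rw [← Algebra.commutes, ← Algebra.smul_def, ← Algebra.smul_def, smul_smul, smul_sum]
    simp only [smul_smul, mul_comm (dftMatrix M ζ k b)]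
  rw [mul_apply]
  simp only [mul_diagonal, conjTranspose_apply, map_apply, ← algebraMap_star_comm, hblock]
  rw [sum_comm]
  simp only [← sum_smul, sum_star_dftMatrix_mul_dftMatrix_mul_pow hζ, ite_smul, one_smul,
    zero_smul, sum_ite_eq', mem_univ, if_true, blockCirculant, of_apply]

lemma traceNorm_comp_blockCirculant [NeZero M] (hζ : IsPrimitiveRoot ζ M)
    (G : Fin M → Matrix ι ι ℂ) :
    traceNorm (comp _ _ _ _ _ (blockCirculant G))
      = ∑ k : Fin M, traceNorm (∑ d, ζ ^ (k.val * d.val) • G d) := by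
  have hW : comp _ _ _ _ _ ((dftMatrix M ζ).map (algebraMap ℂ (Matrix ι ι ℂ)))
      * (comp _ _ _ _ _ ((dftMatrix M ζ).map (algebraMap ℂ (Matrix ι ι ℂ))))ᴴ = 1 := by
    rw [← comp_conjTranspose, ← comp_mul, ← conjTranspose_map _ (algebraMap_star_comm · ),
      ← Matrix.map_mul, dftMatrix_mul_conjTranspose hζ,
      Matrix.map_one _ (map_zero _) (map_one _), comp_one]
  rw [← conjTranspose_mul_diagonal_mul_eq_blockCirculant hζ, comp_mul, comp_mul,
    comp_conjTranspose, traceNorm_conjTranspose_mul_mul_same hW, traceNorm_comp_diagonal]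

end BlockCirculant

section PhaseSymmetry

open Fin.NatCast

variable {M N : ℕ} {τ : Fin M → Fin M → Matrix (Fin N) (Fin N) ℂ} {U : Matrix (Fin N) (Fin N) ℂ}

lemma pow_mul_mul_conjTranspose_pow_of_phase_symmetric [NeZero M]
    (hsym : ∀ k l : Fin M, U * τ k l * Uᴴ = τ (k + 1) (l + 1)) (j : ℕ) (k l : Fin M) :
    U ^ j * τ k l * (U ^ j)ᴴ = τ (k + j) (l + j) := by
  induction j with
  | zero => simp
  | succ j ih =>
    rw [pow_succ', conjTranspose_mul,
      show U * U ^ j * τ k l * ((U ^ j)ᴴ * Uᴴ) = U * (U ^ j * τ k l * (U ^ j)ᴴ) * Uᴴ by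
        simp only [Matrix.mul_assoc],
      ih, hsym, Nat.cast_succ, add_assoc, add_assoc]

lemma mul_pow_eq_of_phase_symmetric [NeZero M] (hU : U ∈ unitaryGroup (Fin N) ℂ)
    (hUM : U ^ M = 1) (hsym : ∀ k l : Fin M, U * τ k l * Uᴴ = τ (k + 1) (l + 1)) (k l : Fin M) :
    τ l k * U ^ l.val = U ^ k.val * (τ (l - k) 0 * U ^ (l - k).val) := by
  have hshift := pow_mul_mul_conjTranspose_pow_of_phase_symmetric hsym k.val (l - k) 0
  rw [Fin.cast_val_eq_self, sub_add_cancel, zero_add] at hshift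
  have hpow : (U ^ k.val)ᴴ * U ^ k.val = 1 := mem_unitaryGroup_iff'.mp (pow_mem hU _)
  have hsplit : U ^ l.val = U ^ k.val * U ^ (l - k).val := by
    rw [← pow_val_add_of_pow_eq_one hUM, add_sub_cancel]
  rw [← hshift, hsplit]
  simp only [Matrix.mul_assoc]
  rw [← Matrix.mul_assoc _ (U ^ k.val), hpow, Matrix.one_mul]

lemma sum_pow_smul_mul_pow_of_phase_symmetric [NeZero M] (hU : U ∈ unitaryGroup (Fin N) ℂ)
    (hUM : U ^ M = 1) (hsym : ∀ k l : Fin M, U * τ k l * Uᴴ = τ (k + 1) (l + 1)) {ζ : ℂ}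
    (hζ : ζ ^ M = 1) (k : Fin M) :
    ∑ l : Fin M, ζ ^ (k.val * l.val) • (τ l k * U ^ l.val)
      = (ζ ^ (k.val * k.val) • U ^ k.val)
        * ∑ d : Fin M, ζ ^ (k.val * d.val) • (τ d 0 * U ^ d.val) := by
  have hk : (ζ ^ k.val) ^ M = 1 := by rw [pow_right_comm, hζ, one_pow]
  rw [mul_sum]
  refine Fintype.sum_equiv (Equiv.subRight k) _ _ fun l => ?_
  have hsplit : ζ ^ (k.val * l.val) = ζ ^ (k.val * k.val) * ζ ^ (k.val * (l - k).val) := by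
    rw [pow_mul, pow_mul, pow_mul, ← pow_val_add_of_pow_eq_one hk, add_sub_cancel]
  rw [Equiv.subRight_apply, mul_pow_eq_of_phase_symmetric hU hUM hsym, hsplit, smul_mul_smul]

lemma blockTranspose_eq_conj_blockCirculant [NeZero M] (hU : U ∈ unitaryGroup (Fin N) ℂ)
    (hUM : U ^ M = 1) (hsym : ∀ k l : Fin M, U * τ k l * Uᴴ = τ (k + 1) (l + 1)) (c : ℂ) :
    (of fun a b => c • τ b a)
      = (diagonal fun a : Fin M => (U ^ a.val)ᴴ)ᴴ
        * blockCirculant (fun d => c • (τ d 0 * U ^ d.val)) * diagonal fun a => (U ^ a.val)ᴴ := by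
  ext1 a b
  simp only [blockCirculant, diagonal_conjTranspose, diagonal_mul, mul_diagonal, of_apply,
    Pi.star_apply, star_eq_conjTranspose, conjTranspose_conjTranspose]
  rw [Matrix.mul_smul, Matrix.smul_mul, ← mul_pow_eq_of_phase_symmetric hU hUM hsym,
    Matrix.mul_assoc, ← star_eq_conjTranspose, mem_unitaryGroup_iff.mp (pow_mem hU _),
    Matrix.mul_one]

end PhaseSymmetry

/-- The partial transpose of a phase-symmetric bipartite matrix satisfies the same
symmetry, and its trace norm is the sum of the trace norms of its standard-form blocks. -/
theorem partial_transpose_symmetry_and_trace_norm {M N : ℕ} [NeZero M]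
    (τ : Fin M → Fin M → Matrix (Fin N) (Fin N) ℂ)
    (U : Matrix (Fin N) (Fin N) ℂ) (hU : U ∈ Matrix.unitaryGroup (Fin N) ℂ)
    (hUM : U ^ M = 1)
    (hsym : ∀ k l : Fin M, U * τ k l * Uᴴ = τ (k + 1) (l + 1))
    (Etil : Fin M → Matrix (Fin N) (Fin N) ℂ)
    (hEtil : ∀ k, Etil k = (1 / M : ℂ) • ∑ l : Fin M,
        (Complex.exp (2 * Real.pi * Complex.I / M)) ^ (k.val * l.val) •
          (τ l k * U ^ l.val)) :
    (∀ k l : Fin M, U * τ l k * Uᴴ = τ (l + 1) (k + 1)) ∧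
    traceNorm (Matrix.of fun p q : Fin M × Fin N =>
        (1 / M : ℂ) * τ q.1 p.1 p.2 q.2) = ∑ k : Fin M, traceNorm (Etil k) := by
  refine ⟨fun k l => hsym l k, ?_⟩
  set ω := Complex.exp (2 * Real.pi * Complex.I / M)
  have hω : IsPrimitiveRoot ω M := Complex.isPrimitiveRoot_exp M (NeZero.ne M)
  set G : Fin M → Matrix (Fin N) (Fin N) ℂ := fun d => (1 / M : ℂ) • (τ d 0 * U ^ d.val)
  set V := comp _ _ _ _ _ (diagonal fun a : Fin M => (U ^ a.val)ᴴ)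
  have hpow : ∀ n : ℕ, (U ^ n)ᴴ * U ^ n = 1 := fun n => mem_unitaryGroup_iff'.mp (pow_mem hU n)
  have hV : V * Vᴴ = 1 := comp_diagonal_mul_conjTranspose fun a => by
    rw [conjTranspose_conjTranspose, hpow]
  have hA : (Matrix.of fun p q : Fin M × Fin N => (1 / M : ℂ) * τ q.1 p.1 p.2 q.2)
      = Vᴴ * comp _ _ _ _ _ (blockCirculant G) * V := by
    change comp _ _ _ _ _ (of fun a b => (1 / M : ℂ) • τ b a) = _
    rw [blockTranspose_eq_conj_blockCirculant hU hUM hsym, comp_mul, comp_mul, comp_conjTranspose]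
  have hE : ∀ k, Etil k = (ω ^ (k.val * k.val) • U ^ k.val) * ∑ d, ω ^ (k.val * d.val) • G d := by
    intro k
    simp only [hEtil k, sum_pow_smul_mul_pow_of_phase_symmetric hU hUM hsym hω.pow_eq_one k, G,
      smul_comm (ω ^ _) (1 / M : ℂ), ← smul_sum, Matrix.mul_smul]
  rw [hA, traceNorm_conjTranspose_mul_mul_same hV, traceNorm_comp_blockCirculant hω]
  refine sum_congr rfl fun k _ => ?_
  have hunit : ‖ω ^ (k.val * k.val)‖ = 1 := by
    rw [norm_pow, hω.norm'_eq_one (NeZero.ne M), one_pow]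
  rw [hE k, traceNorm_mul_of_conjTranspose_mul_self_eq_one]
  rw [conjTranspose_smul, smul_mul_smul, hpow, star_mul_self_of_norm_eq_one hunit, one_smul]
end
end

section
/- In the Fock (eigen)basis of U_θ = exp(−iθ n̂) with θ = 2π/M, the standard-form blocks of the partial transpose are obtained from those of the original by the index rearrangement [Ẽ_k]_{jl} = [E_{j+l−k mod M}]_{jl}. -/
/-!
Swapping the two summation indices `m ↔ n` in the sum defining `Ẽ_k` turns its phase into
`ω ^ (m (k - l) + n (j - k))`, which is the phase of `E_K` at `K = j + l - k`, because
`m (j - K) + n (K - l) = m (k - l) + n (j - k)`. The identity only holds modulo `M`, which is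
enough since `ω = exp (2πi / M)` satisfies `ω ^ M = 1`.
-/

open Matrix Complex Finset

noncomputable section

theorem zpow_eq_zpow_of_intCast_eq {G₀ : Type*} [GroupWithZero G₀] {ζ : G₀} {k : ℕ}
    (hζ : ζ ^ k = 1) {a b : ℤ} (hab : (a : ZMod k) = b) : ζ ^ a = ζ ^ b := by
  obtain ⟨t, ht⟩ := (ZMod.intCast_eq_intCast_iff_dvd_sub a b k).1 hab
  obtain rfl | hζ0 := eq_or_ne ζ 0
  · obtain rfl : k = 0 := zero_pow_eq_one₀.1 hζ
    rw [Nat.cast_zero, zero_mul, sub_eq_zero] at ht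
    rw [ht]
  · rw [sub_eq_iff_eq_add'.1 ht, zpow_add₀ hζ0, _root_.zpow_mul, zpow_natCast, hζ,
      _root_.one_zpow, mul_one]

theorem ZMod.finEquiv_apply {n : ℕ} [NeZero n] (a : Fin n) : ZMod.finEquiv n a = a.val := by
  cases n with
  | zero => exact absurd rfl (NeZero.ne 0)
  | succ n => exact (Fin.cast_val_eq_self a).symm

theorem partial_transpose_block_rearrangement_general {M N : ℕ} [NeZero M]
    (τAB : Matrix (Fin M × Fin N) (Fin M × Fin N) ℂ)
    (E Etil : Fin M → Matrix (Fin N) (Fin N) ℂ)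
    (hE : ∀ (k : Fin M) (j l : Fin N), E k j l = (1 / M : ℂ) *
        ∑ m : Fin M, ∑ n : Fin M,
          (Complex.exp (2 * Real.pi * Complex.I / M)) ^
              ((m.val : ℤ) * ((j.val : ℤ) - (k.val : ℤ)) +
               (n.val : ℤ) * ((k.val : ℤ) - (l.val : ℤ))) *
            τAB (m, j) (n, l))
    (hEtil : ∀ (k : Fin M) (j l : Fin N), Etil k j l = (1 / M : ℂ) *
        ∑ m : Fin M, ∑ n : Fin M,
          (Complex.exp (2 * Real.pi * Complex.I / M)) ^
              ((m.val : ℤ) * ((j.val : ℤ) - (k.val : ℤ)) +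
               (n.val : ℤ) * ((k.val : ℤ) - (l.val : ℤ))) *
            τAB (n, j) (m, l)) :
    ∀ (k : Fin M) (j l : Fin N),
      Etil k j l = E ((Fin.ofNat M (j.val + l.val : ℕ)) - k) j l := by
  have hω : Complex.exp (2 * Real.pi * Complex.I / M) ^ M = 1 :=
    (Complex.isPrimitiveRoot_exp M (NeZero.ne M)).pow_eq_one
  intro k j l
  set K := Fin.ofNat M (j.val + l.val) - k
  have hK : (K.val : ZMod M) = j.val + l.val - k.val := by
    rw [← ZMod.finEquiv_apply, map_sub]
    simp only [ZMod.finEquiv_apply, Fin.val_ofNat, ZMod.natCast_mod, Nat.cast_add]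
  rw [hEtil, hE, Finset.sum_comm]
  congr 1
  refine sum_congr rfl fun n _ => sum_congr rfl fun m _ => ?_
  congr 1
  apply zpow_eq_zpow_of_intCast_eq hω
  push_cast
  rw [hK]
  ring

/-- In the Fock basis of U_θ, the standard-form blocks of the partial transpose are
obtained from those of the original by the index rearrangement
[Ẽ_k]_{jl} = [E_{j+l−k mod M}]_{jl}. -/
theorem partial_transpose_block_rearrangement {M N : ℕ} [NeZero M]
    (τAB : Matrix (Fin M × Fin N) (Fin M × Fin N) ℂ)
    (hsym : ∀ (k l : Fin M) (i j : Fin N),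
      (Matrix.diagonal (fun j : Fin N =>
          (Complex.exp (2 * Real.pi * Complex.I / M)) ^ (-(j.val : ℤ))) *
        (Matrix.of fun i j : Fin N => τAB (k, i) (l, j)) *
        (Matrix.diagonal (fun j : Fin N =>
          (Complex.exp (2 * Real.pi * Complex.I / M)) ^ (-(j.val : ℤ))))ᴴ) i j =
        τAB (k + 1, i) (l + 1, j))
    (E Etil : Fin M → Matrix (Fin N) (Fin N) ℂ)
    (hE : ∀ (k : Fin M) (j l : Fin N), E k j l = (1 / M : ℂ) *
        ∑ m : Fin M, ∑ n : Fin M,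
          (Complex.exp (2 * Real.pi * Complex.I / M)) ^
              ((m.val : ℤ) * ((j.val : ℤ) - (k.val : ℤ)) +
               (n.val : ℤ) * ((k.val : ℤ) - (l.val : ℤ))) *
            τAB (m, j) (n, l))
    (hEtil : ∀ (k : Fin M) (j l : Fin N), Etil k j l = (1 / M : ℂ) *
        ∑ m : Fin M, ∑ n : Fin M,
          (Complex.exp (2 * Real.pi * Complex.I / M)) ^
              ((m.val : ℤ) * ((j.val : ℤ) - (k.val : ℤ)) +
               (n.val : ℤ) * ((k.val : ℤ) - (l.val : ℤ))) *
            τAB (n, j) (m, l)) :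
    ∀ (k : Fin M) (j l : Fin N),
      Etil k j l = E ((Fin.ofNat M (j.val + l.val : ℕ)) - k) j l :=
  partial_transpose_block_rearrangement_general τAB E Etil hE hEtil
end
end
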